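/- arXiv:2209.07142 — 2 statements merged into one kernel-verified Lean document; each statement's English description precedes it below -/
import Mathlib

section
/- For every z > 1, |z³·(e^{z²} erfc(z) - (1/(2z) - 1/(4z³)))| ≤ 3/(8z²). -/
/-!
Integrating `e^{-s²} / s^n = (-2s e^{-s²}) · (-1 / (2 s^{n+1}))` by parts gives the reduction formula
`∫_a^∞ e^{-s²}/sⁿ = e^{-a²}/(2a^{n+1}) - (n+1)/2 · ∫_a^∞ e^{-s²}/s^{n+2}`.
Applied with `n = 0` and `n = 2` it yields
`erfc z = e^{-z²} (1/(2z) - 1/(4z³)) + 3/4 · ∫_z^∞ e^{-s²}/s⁴`, and, since the last integral is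
nonnegative, the same formula with `n = 4` bounds it by `e^{-z²}/(2z⁵)`.
-/

noncomputable def erfc (z : ℝ) : ℝ := ∫ s in Set.Ioi z, Real.exp (-s^2)

open MeasureTheory Set Filter Real

lemma tendsto_exp_neg_sq_atTop : Tendsto (fun s : ℝ => exp (-s ^ 2)) atTop (nhds 0) :=
  tendsto_exp_atBot.comp <| tendsto_neg_atTop_atBot.comp <| tendsto_pow_atTop two_ne_zero

lemma hasDerivAt_exp_neg_sq_div_pow {x : ℝ} (hx : x ≠ 0) (n : ℕ) :
    HasDerivAt (fun s => -exp (-s ^ 2) / (2 * s ^ (n + 1)))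
      (exp (-x ^ 2) / x ^ n + (n + 1) / 2 * (exp (-x ^ 2) / x ^ (n + 2))) x := by
  have hexp : HasDerivAt (fun s => exp (-s ^ 2)) (exp (-x ^ 2) * (-(2 * x))) x := by
    simpa using ((hasDerivAt_pow 2 x).neg).exp
  have hpow : HasDerivAt (fun s => 2 * s ^ (n + 1)) (2 * ((n + 1 : ℕ) * x ^ n)) x :=
    (hasDerivAt_pow (n + 1) x).const_mul 2
  refine (hexp.fun_neg.div hpow (by positivity)).congr_deriv ?_
  push_cast
  field_simp
  ring

lemma integrableOn_exp_neg_sq_div_pow {a : ℝ} (ha : 0 < a) (n : ℕ) :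
    IntegrableOn (fun s => exp (-s ^ 2) / s ^ n) (Ioi a) := by
  have hexp : IntegrableOn (fun s : ℝ => exp (-s ^ 2) / a ^ n) (Ioi a) := by
    simpa using ((integrable_exp_neg_mul_sq one_pos).div_const (a ^ n)).integrableOn
  refine hexp.mono' (Measurable.aestronglyMeasurable (by fun_prop)) ?_
  filter_upwards [ae_restrict_mem measurableSet_Ioi] with s (hs : a < s)
  have hs0 : 0 < s := ha.trans hs
  rw [norm_of_nonneg (by positivity)]
  gcongr

lemma setIntegral_exp_neg_sq_div_pow_nonneg {a : ℝ} (ha : 0 ≤ a) (n : ℕ) :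
    0 ≤ ∫ s in Ioi a, exp (-s ^ 2) / s ^ n :=
  setIntegral_nonneg measurableSet_Ioi fun s (hs : a < s) => by
    have hs0 : 0 < s := ha.trans_lt hs
    positivity

lemma integral_exp_neg_sq_div_pow {a : ℝ} (ha : 0 < a) (n : ℕ) :
    ∫ s in Ioi a, exp (-s ^ 2) / s ^ n
      = exp (-a ^ 2) / (2 * a ^ (n + 1))
        - (n + 1) / 2 * ∫ s in Ioi a, exp (-s ^ 2) / s ^ (n + 2) := by
  have hderiv : ∀ x ∈ Ici a, HasDerivAt (fun s => -exp (-s ^ 2) / (2 * s ^ (n + 1)))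
      (exp (-x ^ 2) / x ^ n + (n + 1) / 2 * (exp (-x ^ 2) / x ^ (n + 2))) x :=
    fun x (hx : a ≤ x) => hasDerivAt_exp_neg_sq_div_pow (ha.trans_le hx).ne' n
  have hint := (integrableOn_exp_neg_sq_div_pow ha n).add
    ((integrableOn_exp_neg_sq_div_pow ha (n + 2)).const_mul ((n + 1) / 2))
  have htendsto : Tendsto (fun s => -exp (-s ^ 2) / (2 * s ^ (n + 1))) atTop (nhds 0) := by
    simpa using tendsto_exp_neg_sq_atTop.neg.div_atTop
      ((tendsto_pow_atTop n.succ_ne_zero).const_mul_atTop two_pos)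
  have hFTC := integral_Ioi_of_hasDerivAt_of_tendsto' hderiv hint htendsto
  rw [integral_add (integrableOn_exp_neg_sq_div_pow ha n)
    ((integrableOn_exp_neg_sq_div_pow ha (n + 2)).const_mul _), integral_const_mul,
    zero_sub, neg_div, neg_neg] at hFTC
  linarith

lemma integral_exp_neg_sq_div_pow_le {a : ℝ} (ha : 0 < a) (n : ℕ) :
    ∫ s in Ioi a, exp (-s ^ 2) / s ^ n ≤ exp (-a ^ 2) / (2 * a ^ (n + 1)) := by
  rw [integral_exp_neg_sq_div_pow ha n]
  have := setIntegral_exp_neg_sq_div_pow_nonneg ha.le (n + 2)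
  have : (0 : ℝ) ≤ (n + 1) / 2 := by positivity
  nlinarith

lemma erfc_eq_add_integral {z : ℝ} (hz : 0 < z) :
    erfc z = exp (-z ^ 2) * (1 / (2 * z) - 1 / (4 * z ^ 3))
      + 3 / 4 * ∫ s in Ioi z, exp (-s ^ 2) / s ^ 4 := by
  have h0 := integral_exp_neg_sq_div_pow hz 0
  have h2 := integral_exp_neg_sq_div_pow hz 2
  simp only [pow_zero, div_one, CharP.cast_eq_zero, zero_add] at h0
  rw [erfc, h0, h2]
  field_simp
  ring

theorem erfc_remainder_bound (z : ℝ) (hz : 1 < z) :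
    |z ^ 3 * (Real.exp (z ^ 2) * erfc z - (1 / (2 * z) - 1 / (4 * z ^ 3)))|
      ≤ 3 / (8 * z ^ 2) := by
  have hz0 : 0 < z := one_pos.trans hz
  set R := ∫ s in Ioi z, exp (-s ^ 2) / s ^ 4
  have hR_nonneg : 0 ≤ R := setIntegral_exp_neg_sq_div_pow_nonneg hz0.le 4
  have hR_le : R ≤ exp (-z ^ 2) / (2 * z ^ 5) := integral_exp_neg_sq_div_pow_le hz0 4
  have hexp : exp (z ^ 2) * exp (-z ^ 2) = 1 := by rw [← exp_add, add_neg_cancel, exp_zero]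
  have hremainder : z ^ 3 * (exp (z ^ 2) * erfc z - (1 / (2 * z) - 1 / (4 * z ^ 3)))
      = 3 / 4 * z ^ 3 * exp (z ^ 2) * R := by
    rw [erfc_eq_add_integral hz0, mul_add, ← mul_assoc, hexp]
    ring
  rw [hremainder, abs_of_nonneg (by positivity)]
  calc 3 / 4 * z ^ 3 * exp (z ^ 2) * R
      ≤ 3 / 4 * z ^ 3 * exp (z ^ 2) * (exp (-z ^ 2) / (2 * z ^ 5)) := by gcongr
    _ = 3 / (8 * z ^ 2) * (exp (z ^ 2) * exp (-z ^ 2)) := by field_simp; ring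
    _ = 3 / (8 * z ^ 2) := by rw [hexp, mul_one]
end

section
/- Let p, q, x be real with |x-p| > |x-q| > 0, and fix t > 0. For ε > 0 set P_ε = |x-p|/√(2tε) and Q_ε = |x-q|/√(2tε). Then erfc(P_ε)/erfc(Q_ε) → 0 as ε → 0⁺. -/
open Real Set Filter MeasureTheory Topology

lemma integrable_exp_neg_sq : Integrable fun s : ℝ => exp (-s ^ 2) := by
  simpa using integrable_exp_neg_mul_sq one_pos

lemma erfc_le_exp_neg_sq_div {z : ℝ} (hz : 0 < z) : erfc z ≤ exp (-z ^ 2) / z := by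
  have hneg : -z < 0 := neg_neg_iff_pos.2 hz
  calc erfc z ≤ ∫ s in Ioi z, exp (-z * s) := by
        refine setIntegral_mono_on integrable_exp_neg_sq.integrableOn
          (integrableOn_exp_mul_Ioi hneg z) measurableSet_Ioi fun s hs => exp_le_exp.2 ?_
        nlinarith [mem_Ioi.1 hs]
    _ = exp (-z ^ 2) / z := by
        rw [integral_exp_mul_Ioi hneg, neg_div_neg_eq, neg_mul, ← sq]

lemma exp_neg_add_one_sq_le_erfc {z : ℝ} (hz : 0 ≤ z) : exp (-(z + 1) ^ 2) ≤ erfc z :=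
  calc exp (-(z + 1) ^ 2) = ∫ _ in Ioc z (z + 1), exp (-(z + 1) ^ 2) := by
        simp
    _ ≤ ∫ s in Ioc z (z + 1), exp (-s ^ 2) := by
        refine setIntegral_mono_on (integrableOn_const (by simp))
          integrable_exp_neg_sq.integrableOn measurableSet_Ioc fun s hs => exp_le_exp.2 ?_
        nlinarith [hs.1, hs.2]
    _ ≤ erfc z :=
        setIntegral_mono_set integrable_exp_neg_sq.integrableOn
          (Eventually.of_forall fun _ => (exp_pos _).le) (Eventually.of_forall Ioc_subset_Ioi_self)

lemma erfc_pos_of_nonneg {z : ℝ} (hz : 0 ≤ z) : 0 < erfc z :=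
  (exp_pos _).trans_le (exp_neg_add_one_sq_le_erfc hz)

lemma erfc_mul_div_erfc_mul_le {a b r : ℝ} (ha : 0 < a) (hb : 0 ≤ b) (hr : 0 < r) :
    erfc (a * r) / erfc (b * r) ≤ exp ((b * r + 1) ^ 2 - (a * r) ^ 2) * (a * r)⁻¹ :=
  calc erfc (a * r) / erfc (b * r) ≤ exp (-(a * r) ^ 2) / (a * r) / exp (-(b * r + 1) ^ 2) :=
        div_le_div₀ (by positivity) (erfc_le_exp_neg_sq_div (by positivity)) (exp_pos _)
          (exp_neg_add_one_sq_le_erfc (by positivity))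
    _ = exp ((b * r + 1) ^ 2 - (a * r) ^ 2) * (a * r)⁻¹ := by
        rw [exp_sub, exp_neg, exp_neg]
        field_simp

lemma tendsto_sq_sub_add_one_sq_atTop {a b : ℝ} (hb : 0 ≤ b) (hab : b < a) :
    Tendsto (fun r => (a * r) ^ 2 - (b * r + 1) ^ 2) atTop atTop := by
  have hdiff : Tendsto (fun r => (a - b) * r - 1) atTop atTop :=
    tendsto_atTop_add_const_right _ _ (tendsto_id.const_mul_atTop (sub_pos.2 hab))
  have hsum : Tendsto (fun r => (a + b) * r + 1) atTop atTop :=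
    tendsto_atTop_add_const_right _ _ (tendsto_id.const_mul_atTop (by linarith))
  refine (hdiff.atTop_mul_atTop₀ hsum).congr fun r => ?_
  ring

lemma tendsto_erfc_mul_div_erfc_mul_atTop {a b : ℝ} (hb : 0 ≤ b) (hab : b < a) :
    Tendsto (fun r => erfc (a * r) / erfc (b * r)) atTop (𝓝 0) := by
  have ha : 0 < a := hb.trans_lt hab
  have hbound : Tendsto (fun r => exp ((b * r + 1) ^ 2 - (a * r) ^ 2) * (a * r)⁻¹) atTop (𝓝 0) := by
    have hexp := tendsto_exp_atBot.comp
      (tendsto_neg_atTop_atBot.comp (tendsto_sq_sub_add_one_sq_atTop hb hab))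
    simpa using hexp.mul (tendsto_id.const_mul_atTop ha).inv_tendsto_atTop
  refine tendsto_of_tendsto_of_tendsto_of_le_of_le' tendsto_const_nhds hbound ?_ ?_
  · filter_upwards [eventually_ge_atTop 0] with r hr
    exact (div_pos (erfc_pos_of_nonneg (by positivity)) (erfc_pos_of_nonneg (by positivity))).le
  · filter_upwards [eventually_gt_atTop 0] with r hr
    exact erfc_mul_div_erfc_mul_le ha hb hr

lemma tendsto_inv_sqrt_mul_nhdsGT_zero {c : ℝ} (hc : 0 < c) :
    Tendsto (fun ε : ℝ => (√(c * ε))⁻¹) (𝓝[>] 0) atTop := by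
  refine (tendsto_sqrt_atTop.comp (tendsto_inv_nhdsGT_zero.atTop_mul_const (inv_pos.2 hc))).congr
    fun ε => ?_
  rw [Function.comp_apply, ← mul_inv, ← sqrt_inv, mul_comm]

theorem erfc_ratio_tendsto_zero_general (p q x t : ℝ) (hpq : |x - q| < |x - p|)
    (ht : 0 < t) :
    Filter.Tendsto
      (fun ε : ℝ => erfc (|x - p| / Real.sqrt (2 * t * ε)) / erfc (|x - q| / Real.sqrt (2 * t * ε)))
      (nhdsWithin 0 (Set.Ioi 0)) (nhds 0) := by
  have hr := tendsto_inv_sqrt_mul_nhdsGT_zero (by positivity : (0 : ℝ) < 2 * t)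
  simpa only [div_eq_mul_inv, Function.comp_def] using
    (tendsto_erfc_mul_div_erfc_mul_atTop (abs_nonneg _) hpq).comp hr

theorem erfc_ratio_tendsto_zero (p q x t : ℝ) (hpq : |x - q| < |x - p|)
    (hq : 0 < |x - q|) (ht : 0 < t) :
    Filter.Tendsto
      (fun ε : ℝ => erfc (|x - p| / Real.sqrt (2 * t * ε)) / erfc (|x - q| / Real.sqrt (2 * t * ε)))
      (nhdsWithin 0 (Set.Ioi 0)) (nhds 0) :=
  erfc_ratio_tendsto_zero_general p q x t hpq ht
end
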